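/- Every finite tree T with q ≥ 1 edges admits an odd-edge edge-magic total coloring: there exist a constant k and an assignment f of natural numbers to the vertices and edges of T such that the set of edge colors {f(e) : e ∈ E(T)} equals the odd set {1,3,…,2q−1} and f(u) + f(uv) + f(v) = k for every edge uv of T. -/

import Mathlib

/-!
Label the edges bijectively by the odd numbers below `2q`. In a forest, any edge weights `w` are
realised as `w(uv) = h u + h v`: root each component and let `h v` be the alternating sum of the
weights along the path from `v` to its root, since of two adjacent vertices the path of one extends
that of the other by their edge. Taking `w = -f` and shifting `h` by a constant to make it
nonnegative gives the magic constant.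
-/

open SimpleGraph

lemma Set.image_two_mul_add_one_Iio (q : ℕ) :
    (fun i => 2 * i + 1) '' Set.Iio q = {n : ℕ | Odd n ∧ n < 2 * q} := by
  ext n
  constructor
  · rintro ⟨i, hi, rfl⟩
    exact ⟨odd_two_mul_add_one i, by rw [Set.mem_Iio] at hi; dsimp only; omega⟩
  · rintro ⟨⟨i, rfl⟩, hn⟩
    exact ⟨i, by simp only [Set.mem_Iio]; omega, rfl⟩

lemma Finset.exists_image_eq_Iio_card {α : Type*} (s : Finset α) :
    ∃ g : α → ℕ, g '' s = Set.Iio s.card := by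
  classical
  refine ⟨fun a => if h : a ∈ s then s.equivFin ⟨a, h⟩ else 0, ?_⟩
  rw [Set.image_eq_range, ← Fin.range_val, ← s.equivFin.surjective.range_comp]
  congr 1
  ext ⟨a, ha⟩
  exact dif_pos ha

lemma Finset.exists_image_eq_odd_lt {α : Type*} (s : Finset α) :
    ∃ f : α → ℕ, f '' s = {n : ℕ | Odd n ∧ n < 2 * s.card} := by
  obtain ⟨g, hg⟩ := s.exists_image_eq_Iio_card
  exact ⟨_, by rw [Set.image_comp, hg, Set.image_two_mul_add_one_Iio]⟩

namespace SimpleGraph.IsAcyclic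

variable {V : Type*} {G : SimpleGraph V}

lemma eq_concat_or_eq_concat (hG : G.IsAcyclic) {r u v : V} {p : G.Walk r u} {q : G.Walk r v}
    (hp : p.IsPath) (hq : q.IsPath) (h : G.Adj u v) :
    q = p.concat h ∨ p = q.concat h.symm := by
  by_cases hv : v ∈ p.support
  · exact .inr (hG.path_concat hq hp h.symm hv)
  · exact .inl (hG.path_concat hp hq h
      (hG.mem_support_of_ne_mem_support_of_adj_of_isPath hq hp h.symm hv))

lemma alternatingSum_reverse_add_alternatingSum_reverse {A : Type*} [AddCommGroup A]
    (hG : G.IsAcyclic) (w : Sym2 V → A) {r u v : V} {p : G.Walk r u} {q : G.Walk r v}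
    (hp : p.IsPath) (hq : q.IsPath) (h : G.Adj u v) :
    (p.reverse.edges.map w).alternatingSum + (q.reverse.edges.map w).alternatingSum
      = w s(u, v) := by
  rcases hG.eq_concat_or_eq_concat hp hq h with rfl | rfl <;>
    simp [Walk.reverse_concat, List.alternatingSum_cons, Sym2.eq_swap]

lemma exists_add_eq {A : Type*} [AddCommGroup A] (hG : G.IsAcyclic) (w : Sym2 V → A) :
    ∃ h : V → A, ∀ u v, G.Adj u v → h u + h v = w s(u, v) := by
  have hroot (v : V) : G.Reachable (G.connectedComponentMk v).out v :=
    ConnectedComponent.exact (G.connectedComponentMk v).out_eq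
  choose P hP using fun v => (hroot v).exists_isPath
  refine ⟨fun v => ((P v).reverse.edges.map w).alternatingSum, fun u v huv => ?_⟩
  have hsame : (G.connectedComponentMk u).out = (G.connectedComponentMk v).out := by
    rw [ConnectedComponent.sound huv.reachable]
  simpa using hG.alternatingSum_reverse_add_alternatingSum_reverse w (hP u)
    ((Walk.isPath_copy _ hsame.symm rfl).mpr (hP v)) huv

lemma exists_add_add_eq [Finite V] (hG : G.IsAcyclic) (f : Sym2 V → ℕ) :
    ∃ (fV : V → ℕ) (k : ℕ), ∀ u v, G.Adj u v → fV u + f s(u, v) + fV v = k := by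
  obtain ⟨h, hh⟩ := hG.exists_add_eq (fun e => -(f e : ℤ))
  obtain ⟨m, hm⟩ := (Set.finite_range h).bddBelow
  refine ⟨fun v => (h v - m).toNat, (-2 * m).toNat, fun u v huv => ?_⟩
  have hu : m ≤ h u := hm ⟨u, rfl⟩
  have hv : m ≤ h v := hm ⟨v, rfl⟩
  have := hh u v huv
  dsimp only
  omega

end SimpleGraph.IsAcyclic

theorem tree_admits_odd_edge_edge_magic_total_coloring_general
    {V : Type*} [Fintype V]
    (T : SimpleGraph V) [DecidableRel T.Adj]
    (hT : T.IsTree)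
    (q : ℕ) (hq : q = T.edgeFinset.card) :
    ∃ (fV : V → ℕ) (fE : Sym2 V → ℕ) (k : ℕ),
      fE '' T.edgeSet = {n : ℕ | Odd n ∧ n < 2 * q} ∧
      ∀ u v, T.Adj u v → fV u + fE s(u, v) + fV v = k := by
  obtain ⟨fE, hfE⟩ := T.edgeFinset.exists_image_eq_odd_lt
  obtain ⟨fV, k, hk⟩ := hT.isAcyclic.exists_add_add_eq fE
  exact ⟨fV, fE, k, by rwa [← coe_edgeFinset, hq], hk⟩

/-- Every finite tree `T` with `q ≥ 1` edges admits an odd-edge edge-magic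
total coloring: there are a constant `k` and colors on vertices and edges such that the
edge-color set is exactly `{1, 3, …, 2q - 1}` and `f(u) + f(uv) + f(v) = k` for every
edge `uv`. -/
theorem tree_admits_odd_edge_edge_magic_total_coloring
    {V : Type*} [Fintype V] [DecidableEq V]
    (T : SimpleGraph V) [DecidableRel T.Adj]
    (hT : T.IsTree)
    (q : ℕ) (hq : q = T.edgeFinset.card) (hq1 : 1 ≤ q) :
    ∃ (fV : V → ℕ) (fE : Sym2 V → ℕ) (k : ℕ),
      fE '' T.edgeSet = {n : ℕ | Odd n ∧ n < 2 * q} ∧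
      ∀ u v, T.Adj u v → fV u + fE s(u, v) + fV v = k :=
  tree_admits_odd_edge_edge_magic_total_coloring_general T hT q hq
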